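/- Let q ∈ (1,∞) and κ ≥ 0. There are constants 0 < c ≤ C < ∞ depending only on q such that for all a, t ≥ 0 with κ + a + t > 0: c (κ + a + t)^{q−2} t² ≤ ρ_a(t) ≤ C (κ + a + t)^{q−2} t². -/

import Mathlib

/-!
The integrand `g(τ) = (κ+a+τ)^{q−2} τ = (κ+a+τ)^{q−1} · τ/(κ+a+τ)` is nondecreasing when `q ≥ 1`.
Hence `ρ_a(t)` lies between `(t/2)·g(t/2)` and `t·g(t)`, and `κ+a+t/2` is comparable to
`κ+a+t` within a factor of two, which costs at most a factor `2^{max(q−2, 0)}` on the power `q − 2`.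
-/

/-- The shifted `N`-function `ρ_a(t) = ∫₀ᵗ (κ+a+τ)^{q−2} τ dτ` associated with
`ρ(t) = ∫₀ᵗ (κ+s)^{q−2} s ds`. -/
noncomputable def rhoShift (κ q a t : ℝ) : ℝ :=
  ∫ τ in (0:ℝ)..t, (κ + a + τ) ^ (q - 2) * τ

open Set Real

section MonotoneIntegral

variable {f : ℝ → ℝ} {a b : ℝ}

theorem MonotoneOn.integral_le_mul_right (hf : MonotoneOn f (Icc a b)) (hab : a ≤ b) :
    ∫ x in a..b, f x ≤ (b - a) * f b := by
  have hint : IntervalIntegrable f MeasureTheory.volume a b :=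
    MonotoneOn.intervalIntegrable (by rwa [uIcc_of_le hab])
  calc ∫ x in a..b, f x ≤ ∫ _ in a..b, f b :=
        intervalIntegral.integral_mono_on hab hint intervalIntegrable_const
          fun x hx => hf hx ⟨hab, le_rfl⟩ hx.2
    _ = (b - a) * f b := by rw [intervalIntegral.integral_const, smul_eq_mul]

theorem MonotoneOn.mul_le_integral_of_nonneg (hf : MonotoneOn f (Icc a b)) (hfa : 0 ≤ f a)
    {m : ℝ} (ham : a ≤ m) (hmb : m ≤ b) :
    (b - m) * f m ≤ ∫ x in a..b, f x := by
  have hint : ∀ {c d}, a ≤ c → c ≤ d → d ≤ b → IntervalIntegrable f MeasureTheory.volume c d :=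
    fun hac hcd hdb => MonotoneOn.intervalIntegrable <| by
      rw [uIcc_of_le hcd]; exact hf.mono (Icc_subset_Icc hac hdb)
  have hlow : 0 ≤ ∫ x in a..m, f x :=
    intervalIntegral.integral_nonneg ham fun x hx =>
      hfa.trans (hf ⟨le_rfl, ham.trans hmb⟩ ⟨hx.1, hx.2.trans hmb⟩ hx.1)
  calc (b - m) * f m = ∫ _ in m..b, f m := by
        rw [intervalIntegral.integral_const, smul_eq_mul]
    _ ≤ ∫ x in m..b, f x :=
        intervalIntegral.integral_mono_on hmb intervalIntegrable_const (hint ham hmb le_rfl)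
          fun x hx => hf ⟨ham, hmb⟩ ⟨ham.trans hx.1, hx.2⟩ hx.1
    _ ≤ ∫ x in a..b, f x := by
        rw [← intervalIntegral.integral_add_adjacent_intervals (hint le_rfl ham hmb)
          (hint ham hmb le_rfl)]
        linarith

end MonotoneIntegral

theorem monotoneOn_add_rpow_mul {b p : ℝ} (hb : 0 ≤ b) (hp : -1 ≤ p) :
    MonotoneOn (fun τ => (b + τ) ^ p * τ) (Ici 0) := by
  intro x (hx : 0 ≤ x) y (hy : 0 ≤ y) hxy
  rcases (add_nonneg hb hx).eq_or_lt with hbx | hbx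
  · have hx0 : x = 0 := by linarith
    simp only [hx0, mul_zero]
    exact mul_nonneg (rpow_nonneg (by linarith) _) hy
  have hby : 0 < b + y := by linarith
  have hsplit : ∀ z, 0 < b + z → (b + z) ^ p * z = (b + z) ^ (p + 1) * (z / (b + z)) := by
    intro z hz
    rw [rpow_add hz, rpow_one]
    field_simp
  simp only [hsplit x hbx, hsplit y hby]
  apply mul_le_mul (rpow_le_rpow hbx.le (by linarith) (by linarith))
  · rw [div_le_div_iff₀ hbx hby]
    nlinarith
  · exact div_nonneg hx hbx.le
  · exact rpow_nonneg hby.le _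

theorem min_one_two_rpow_mul_rpow_le {x y : ℝ} (p : ℝ) (hy : 0 < y) (hyx : y / 2 ≤ x)
    (hxy : x ≤ y) : min 1 (2 ^ (-p)) * y ^ p ≤ x ^ p := by
  rcases le_or_gt 0 p with hp | hp
  · calc min 1 (2 ^ (-p)) * y ^ p ≤ 2 ^ (-p) * y ^ p := by
          gcongr; exact min_le_right _ _
      _ = (y / 2) ^ p := by
          rw [div_rpow hy.le zero_le_two, rpow_neg zero_le_two, inv_mul_eq_div]
      _ ≤ x ^ p := rpow_le_rpow (by positivity) hyx hp
  · calc min 1 (2 ^ (-p)) * y ^ p ≤ 1 * y ^ p := by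
          gcongr; exact min_le_left _ _
      _ = y ^ p := one_mul _
      _ ≤ x ^ p := rpow_le_rpow_of_nonpos (by linarith) hxy hp.le

/-- (Lemma `lem:shift_sim`: `ρ_a(t) ∼ (κ+a+t)^{q−2} t²`.)
Let `q ∈ (1,∞)` and `κ ≥ 0`. There are constants `0 < c ≤ C < ∞` depending only on `q`
such that for all `a, t ≥ 0` with `κ + a + t > 0`:
`c (κ+a+t)^{q−2} t² ≤ ρ_a(t) ≤ C (κ+a+t)^{q−2} t²`. -/
theorem stmt13 (q : ℝ) (hq : 1 < q) :
    ∃ c C : ℝ, 0 < c ∧ c ≤ C ∧ ∀ κ a t : ℝ, 0 ≤ κ → 0 ≤ a → 0 ≤ t → 0 < κ + a + t →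
      c * (κ + a + t) ^ (q - 2) * t ^ 2 ≤ rhoShift κ q a t ∧
      rhoShift κ q a t ≤ C * (κ + a + t) ^ (q - 2) * t ^ 2 := by
  set m := min 1 ((2:ℝ) ^ (-(q - 2)))
  have hm0 : 0 < m := lt_min one_pos (rpow_pos_of_pos two_pos _)
  have hm1 : m ≤ 1 := min_le_left _ _
  refine ⟨m / 4, 1, by positivity, by linarith, fun κ a t hκ ha ht _ => ?_⟩
  rcases ht.eq_or_lt with rfl | htpos
  · simp [rhoShift]
  have hb : 0 ≤ κ + a := by positivity
  have hmono : MonotoneOn (fun τ => (κ + a + τ) ^ (q - 2) * τ) (Icc 0 t) :=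
    (monotoneOn_add_rpow_mul hb (by linarith)).mono Icc_subset_Ici_self
  constructor
  · have hhalf : m * (κ + a + t) ^ (q - 2) ≤ (κ + a + t / 2) ^ (q - 2) :=
      min_one_two_rpow_mul_rpow_le _ (by linarith) (by linarith) (by linarith)
    calc m / 4 * (κ + a + t) ^ (q - 2) * t ^ 2
        ≤ (t - t / 2) * ((κ + a + t / 2) ^ (q - 2) * (t / 2)) := by nlinarith
      _ ≤ rhoShift κ q a t :=
        hmono.mul_le_integral_of_nonneg (by simp) (by linarith) (by linarith)
  · calc rhoShift κ q a t ≤ (t - 0) * ((κ + a + t) ^ (q - 2) * t) :=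
        hmono.integral_le_mul_right ht
      _ = 1 * (κ + a + t) ^ (q - 2) * t ^ 2 := by ring
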